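/- arXiv:2308.10222 — 3 statements merged into one kernel-verified Lean document; each statement's English description precedes it below -/
import Mathlib

section
/- For every γ < 1 there are constants 0 < c₁ ≤ c₂ depending only on n and γ such that for all z₁, z₂ ∈ ℝⁿ with |z₁| + |z₂| + ω > 0, c₁ (|z₁|² + |z₂|² + ω²)^{-γ/2} ≤ ∫₀¹ (|z₂ + τ(z₁ - z₂)|² + ω²)^{-γ/2} dτ ≤ c₂ (|z₁|² + |z₂|² + ω²)^{-γ/2}. -/
/-!
Write `S = |z₁|² + |z₂|² + ω²` and `q(τ) = |z₂ + τ (z₁ - z₂)|² + ω²`. By convexity `q ≤ S` on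
`[0, 1]`, and the reverse triangle inequality gives `|τ - s|² S ≤ q(τ)` for the point
`s = |z₂| / (|z₁| + |z₂|)` where `τ |z₁| - (1 - τ) |z₂|` changes sign. Hence `q^(-γ/2)` lies
between `S^(-γ/2)` and `|τ - s|^(-γ) S^(-γ/2)`, and `∫₀¹ |τ - s|^(-γ) dτ` is bounded above and
below by positive constants precisely because `-γ > -1`.
-/

open MeasureTheory Set intervalIntegral Real

theorem intervalIntegrable_abs_sub_rpow_and_integral_eq {r : ℝ} (hr : -1 < r) {s : ℝ}
    (hs : s ∈ Icc (0 : ℝ) 1) :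
    IntervalIntegrable (fun τ => |τ - s| ^ r) volume 0 1 ∧
      ∫ τ in (0 : ℝ)..1, |τ - s| ^ r = (s ^ (r + 1) + (1 - s) ^ (r + 1)) / (r + 1) := by
  have hleft : EqOn (fun τ => |τ - s| ^ r) (fun τ => (s - τ) ^ r) (uIcc 0 s) := by
    intro τ hτ
    rw [uIcc_of_le hs.1] at hτ
    simp only [abs_sub_comm τ, abs_of_nonneg (sub_nonneg.2 hτ.2)]
  have hright : EqOn (fun τ => |τ - s| ^ r) (fun τ => (τ - s) ^ r) (uIcc s 1) := by
    intro τ hτ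
    rw [uIcc_of_le hs.2] at hτ
    simp only [abs_of_nonneg (sub_nonneg.2 hτ.1)]
  have hi₁ : IntervalIntegrable (fun τ => |τ - s| ^ r) volume 0 s := by
    refine (intervalIntegrable_congr (hleft.mono uIoc_subset_uIcc)).2 ?_
    simpa using (intervalIntegrable_rpow' hr (a := s) (b := 0)).comp_sub_left s
  have hi₂ : IntervalIntegrable (fun τ => |τ - s| ^ r) volume s 1 := by
    refine (intervalIntegrable_congr (hright.mono uIoc_subset_uIcc)).2 ?_
    simpa using (intervalIntegrable_rpow' hr (a := 0) (b := 1 - s)).comp_sub_right s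
  refine ⟨hi₁.trans hi₂, ?_⟩
  rw [← integral_add_adjacent_intervals hi₁ hi₂, integral_congr hleft, integral_congr hright,
    integral_comp_sub_left (fun x => x ^ r), integral_comp_sub_right (fun x => x ^ r),
    integral_rpow (Or.inl hr), integral_rpow (Or.inl hr)]
  simp only [sub_zero, sub_self, zero_rpow (by linarith : r + 1 ≠ 0)]
  ring

theorem integral_abs_sub_rpow_mem_Icc {r : ℝ} (hr : -1 < r) {s : ℝ} (hs : s ∈ Icc (0 : ℝ) 1) :
    ∫ τ in (0 : ℝ)..1, |τ - s| ^ r ∈ Icc ((1 / 2) ^ (r + 1) / (r + 1)) (2 / (r + 1)) := by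
  have hr₁ : 0 < r + 1 := by linarith
  have hpow_le_one : ∀ x ∈ Icc (0 : ℝ) 1, x ^ (r + 1) ≤ 1 := fun x hx =>
    rpow_le_one hx.1 hx.2 hr₁.le
  have hs' : 1 - s ∈ Icc (0 : ℝ) 1 := ⟨by linarith [hs.2], by linarith [hs.1]⟩
  rw [(intervalIntegrable_abs_sub_rpow_and_integral_eq hr hs).2]
  refine ⟨div_le_div_of_nonneg_right ?_ hr₁.le, div_le_div_of_nonneg_right ?_ hr₁.le⟩
  · -- one of the two pieces `[0, s]`, `[s, 1]` has length at least `1 / 2`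
    have hs₀ := rpow_nonneg hs.1 (r + 1)
    have hs₁ := rpow_nonneg hs'.1 (r + 1)
    rcases le_total (1 / 2) s with h | h
    · linarith [rpow_le_rpow (by norm_num) h hr₁.le]
    · linarith [rpow_le_rpow (by norm_num) (by linarith : (1 / 2 : ℝ) ≤ 1 - s) hr₁.le]
  · linarith [hpow_le_one s hs, hpow_le_one (1 - s) hs']

theorem intervalIntegral.integral_mem_Icc_of_ae_mem_Icc {f g h : ℝ → ℝ} {a b : ℝ} (hab : a ≤ b)
    (hf : AEStronglyMeasurable f volume)
    (hg : IntervalIntegrable g volume a b) (hh : IntervalIntegrable h volume a b)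
    (hfgh : ∀ᵐ x, x ∈ Icc a b → f x ∈ Icc (g x) (h x)) :
    ∫ x in a..b, f x ∈ Icc (∫ x in a..b, g x) (∫ x in a..b, h x) := by
  have hfgh' : ∀ᵐ x ∂volume.restrict (Icc a b), f x ∈ Icc (g x) (h x) :=
    (ae_restrict_iff' measurableSet_Icc).2 hfgh
  have hfi : IntervalIntegrable f volume a b := by
    refine (hg.abs.add hh.abs).mono_fun' hf.restrict ?_
    rw [uIoc_of_le hab]
    filter_upwards [ae_restrict_of_ae_restrict_of_subset Ioc_subset_Icc_self hfgh'] with x hx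
    exact (abs_le_max_abs_abs hx.1 hx.2).trans (max_le_add_of_nonneg (abs_nonneg _) (abs_nonneg _))
  exact ⟨integral_mono_ae_restrict hab hg hfi (hfgh'.mono fun x hx => hx.1),
    integral_mono_ae_restrict hab hfi hh (hfgh'.mono fun x hx => hx.2)⟩

theorem rpow_sq_abs_mul {S : ℝ} (hS : 0 ≤ S) (t r : ℝ) :
    (|t| ^ 2 * S) ^ (r / 2) = |t| ^ r * S ^ (r / 2) := by
  rw [mul_rpow (by positivity) hS, ← rpow_natCast, ← rpow_mul (abs_nonneg t)]
  congr 2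
  push_cast
  ring

section Comparison

variable {q : ℝ → ℝ} {S s γ : ℝ}

theorem integral_rpow_mem_Icc_of_nonneg (hq : Measurable q) (hS : 0 < S)
    (hs : s ∈ Icc (0 : ℝ) 1) (hγ₀ : 0 ≤ γ) (hγ : γ < 1)
    (hqS : ∀ τ ∈ Icc (0 : ℝ) 1, |τ - s| ^ 2 * S ≤ q τ ∧ q τ ≤ S) :
    ∫ τ in (0 : ℝ)..1, q τ ^ (-(γ / 2)) ∈
      Icc (S ^ (-(γ / 2))) (2 / (1 - γ) * S ^ (-(γ / 2))) := by
  have hr : -1 < -γ := by linarith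
  have hmem := integral_mem_Icc_of_ae_mem_Icc zero_le_one
    (hq.pow_const (-(γ / 2))).aestronglyMeasurable
    (intervalIntegrable_const (c := S ^ (-(γ / 2))))
    ((intervalIntegrable_abs_sub_rpow_and_integral_eq hr hs).1.mul_const (S ^ (-(γ / 2)))) ?_
  · rw [intervalIntegral.integral_const, intervalIntegral.integral_mul_const] at hmem
    refine ⟨by simpa using hmem.1, hmem.2.trans (mul_le_mul_of_nonneg_right ?_ (by positivity))⟩
    simpa [neg_add_eq_sub] using (integral_abs_sub_rpow_mem_Icc hr hs).2
  · filter_upwards [Measure.ae_ne volume s] with τ hτs hτ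
    have hpos : 0 < |τ - s| ^ 2 * S := by
      have := abs_pos.2 (sub_ne_zero.2 hτs)
      positivity
    refine ⟨rpow_le_rpow_of_nonpos (hpos.trans_le (hqS τ hτ).1) (hqS τ hτ).2 (by linarith), ?_⟩
    rw [← neg_div, ← rpow_sq_abs_mul hS.le, neg_div]
    exact rpow_le_rpow_of_nonpos hpos (hqS τ hτ).1 (by linarith)

theorem integral_rpow_mem_Icc_of_nonpos (hq : Measurable q) (hS : 0 < S)
    (hs : s ∈ Icc (0 : ℝ) 1) (hγ₀ : γ ≤ 0)
    (hqS : ∀ τ ∈ Icc (0 : ℝ) 1, |τ - s| ^ 2 * S ≤ q τ ∧ q τ ≤ S) :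
    ∫ τ in (0 : ℝ)..1, q τ ^ (-(γ / 2)) ∈
      Icc ((1 / 2) ^ (1 - γ) / (1 - γ) * S ^ (-(γ / 2))) (S ^ (-(γ / 2))) := by
  have hr : -1 < -γ := by linarith
  have hmem := integral_mem_Icc_of_ae_mem_Icc zero_le_one
    (hq.pow_const (-(γ / 2))).aestronglyMeasurable
    ((intervalIntegrable_abs_sub_rpow_and_integral_eq hr hs).1.mul_const (S ^ (-(γ / 2))))
    (intervalIntegrable_const (c := S ^ (-(γ / 2)))) ?_
  · rw [intervalIntegral.integral_const, intervalIntegral.integral_mul_const] at hmem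
    refine ⟨le_trans (mul_le_mul_of_nonneg_right ?_ (by positivity)) hmem.1, by simpa using hmem.2⟩
    simpa [neg_add_eq_sub] using (integral_abs_sub_rpow_mem_Icc hr hs).1
  · refine ae_of_all _ fun τ hτ => ?_
    have hlow : 0 ≤ |τ - s| ^ 2 * S := by positivity
    refine ⟨?_, rpow_le_rpow (hlow.trans (hqS τ hτ).1) (hqS τ hτ).2 (by linarith)⟩
    rw [← neg_div, ← rpow_sq_abs_mul hS.le, neg_div]
    exact rpow_le_rpow hlow (hqS τ hτ).1 (by linarith)

theorem exists_integral_rpow_comparable (hγ : γ < 1) :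
    ∃ c₁ c₂ : ℝ, 0 < c₁ ∧ c₁ ≤ c₂ ∧ ∀ (q : ℝ → ℝ) (S s : ℝ), Measurable q → 0 < S →
      s ∈ Icc (0 : ℝ) 1 → (∀ τ ∈ Icc (0 : ℝ) 1, |τ - s| ^ 2 * S ≤ q τ ∧ q τ ≤ S) →
      ∫ τ in (0 : ℝ)..1, q τ ^ (-(γ / 2)) ∈
        Icc (c₁ * S ^ (-(γ / 2))) (c₂ * S ^ (-(γ / 2))) := by
  have h₁ : 0 < 1 - γ := by linarith
  refine ⟨min 1 ((1 / 2) ^ (1 - γ) / (1 - γ)), max 1 (2 / (1 - γ)), by positivity,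
    (min_le_left _ _).trans (le_max_left _ _), fun q S s hq hS hs hqS => ?_⟩
  have hSγ : 0 ≤ S ^ (-(γ / 2)) := by positivity
  rcases le_total 0 γ with hγ₀ | hγ₀
  · refine Icc_subset_Icc ?_ ?_ (integral_rpow_mem_Icc_of_nonneg hq hS hs hγ₀ hγ hqS)
    · exact mul_le_of_le_one_left hSγ (min_le_left _ _)
    · exact mul_le_mul_of_nonneg_right (le_max_right _ _) hSγ
  · refine Icc_subset_Icc ?_ ?_ (integral_rpow_mem_Icc_of_nonpos hq hS hs hγ₀ hqS)
    · exact mul_le_mul_of_nonneg_right (min_le_right _ _) hSγ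
    · exact le_mul_of_one_le_left hSγ (le_max_left _ _)

end Comparison

theorem norm_div_norm_add_norm_mem_Icc {E : Type*} [SeminormedAddCommGroup E] (z₁ z₂ : E) :
    ‖z₂‖ / (‖z₁‖ + ‖z₂‖) ∈ Icc (0 : ℝ) 1 :=
  unitInterval.div_mem (norm_nonneg _) (by positivity) (le_add_of_nonneg_left (norm_nonneg _))

section Segment

variable {E : Type*} [SeminormedAddCommGroup E] [NormedSpace ℝ E] (z₁ z₂ : E) {τ : ℝ}

theorem norm_segment_sq_le (hτ : τ ∈ Icc (0 : ℝ) 1) :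
    ‖z₂ + τ • (z₁ - z₂)‖ ^ 2 ≤ ‖z₁‖ ^ 2 + ‖z₂‖ ^ 2 := by
  obtain ⟨hτ₀, hτ₁⟩ := hτ
  have hconvex : ‖z₂ + τ • (z₁ - z₂)‖ ≤ τ * ‖z₁‖ + (1 - τ) * ‖z₂‖ := by
    rw [show z₂ + τ • (z₁ - z₂) = τ • z₁ + (1 - τ) • z₂ by module]
    refine (norm_add_le _ _).trans_eq ?_
    rw [norm_smul, norm_smul, norm_of_nonneg hτ₀, norm_of_nonneg (sub_nonneg.2 hτ₁)]
  have := norm_nonneg (z₂ + τ • (z₁ - z₂))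
  nlinarith [mul_nonneg hτ₀ (sub_nonneg.2 hτ₁), mul_nonneg (norm_nonneg z₁) (norm_nonneg z₂),
    sq_nonneg (‖z₁‖ - ‖z₂‖)]

theorem abs_sub_le_norm_segment (hτ : τ ∈ Icc (0 : ℝ) 1) :
    |τ * ‖z₁‖ - (1 - τ) * ‖z₂‖| ≤ ‖z₂ + τ • (z₁ - z₂)‖ := by
  have h := abs_norm_sub_norm_le (τ • z₁) ((τ - 1) • z₂)
  rwa [norm_smul, norm_smul, norm_of_nonneg hτ.1, norm_sub_rev,
    norm_of_nonneg (sub_nonneg.2 hτ.2),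
    show τ • z₁ - (τ - 1) • z₂ = z₂ + τ • (z₁ - z₂) by module] at h

theorem sq_abs_sub_mul_le_norm_segment_sq_add (ω : ℝ) (hτ : τ ∈ Icc (0 : ℝ) 1) :
    |τ - ‖z₂‖ / (‖z₁‖ + ‖z₂‖)| ^ 2 * (‖z₁‖ ^ 2 + ‖z₂‖ ^ 2 + ω ^ 2) ≤
      ‖z₂ + τ • (z₁ - z₂)‖ ^ 2 + ω ^ 2 := by
  set s := ‖z₂‖ / (‖z₁‖ + ‖z₂‖)
  have hs : s ∈ Icc (0 : ℝ) 1 := norm_div_norm_add_norm_mem_Icc z₁ z₂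
  have hτs : |τ - s| ≤ 1 := abs_sub_le_iff.2 ⟨by linarith [hτ.2, hs.1], by linarith [hτ.1, hs.2]⟩
  have hsq : |τ - s| ^ 2 ≤ 1 := by nlinarith [abs_nonneg (τ - s)]
  rcases (add_nonneg (norm_nonneg z₁) (norm_nonneg z₂)).eq_or_lt with hzero | hpos
  · have h₁ : ‖z₁‖ = 0 := by linarith [norm_nonneg z₁, norm_nonneg z₂]
    have h₂ : ‖z₂‖ = 0 := by linarith [norm_nonneg z₁, norm_nonneg z₂]
    rw [h₁, h₂]
    nlinarith [sq_nonneg ω, sq_nonneg ‖z₂ + τ • (z₁ - z₂)‖]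
  · have hdist : (‖z₁‖ + ‖z₂‖) * |τ - s| ≤ ‖z₂ + τ • (z₁ - z₂)‖ := by
      have hs_mul : (‖z₁‖ + ‖z₂‖) * s = ‖z₂‖ := mul_div_cancel₀ _ hpos.ne'
      have h := abs_sub_le_norm_segment z₁ z₂ hτ
      rwa [show τ * ‖z₁‖ - (1 - τ) * ‖z₂‖ = (‖z₁‖ + ‖z₂‖) * (τ - s) by
          linear_combination hs_mul,
        abs_mul, abs_of_pos hpos] at h
    have hdist_sq := pow_le_pow_left₀ (by positivity) hdist 2
    nlinarith [mul_nonneg (norm_nonneg z₁) (norm_nonneg z₂), sq_nonneg (|τ - s|),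
      mul_le_mul_of_nonneg_right hsq (sq_nonneg ω)]

end Segment

/-- two-sided equivalence (l60) of the paper, valid for `γ < 1`. -/
theorem segment_power_two_sided (n : ℕ) (γ : ℝ) (hγ : γ < 1) :
    ∃ c₁ c₂ : ℝ, 0 < c₁ ∧ c₁ ≤ c₂ ∧
      ∀ (z₁ z₂ : EuclideanSpace ℝ (Fin n)) (ω : ℝ),
        ω ∈ Set.Icc (0:ℝ) 1 → 0 < ‖z₁‖ + ‖z₂‖ + ω →
        c₁ * (‖z₁‖ ^ 2 + ‖z₂‖ ^ 2 + ω ^ 2) ^ (-(γ / 2)) ≤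
            (∫ τ in (0:ℝ)..1, (‖z₂ + τ • (z₁ - z₂)‖ ^ 2 + ω ^ 2) ^ (-(γ / 2))) ∧
          (∫ τ in (0:ℝ)..1, (‖z₂ + τ • (z₁ - z₂)‖ ^ 2 + ω ^ 2) ^ (-(γ / 2))) ≤
            c₂ * (‖z₁‖ ^ 2 + ‖z₂‖ ^ 2 + ω ^ 2) ^ (-(γ / 2)) := by
  obtain ⟨c₁, c₂, hc₁, hc₁₂, hcompare⟩ := exists_integral_rpow_comparable hγ
  refine ⟨c₁, c₂, hc₁, hc₁₂, fun z₁ z₂ ω _ hpos => ?_⟩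
  have hS : 0 < ‖z₁‖ ^ 2 + ‖z₂‖ ^ 2 + ω ^ 2 := by
    nlinarith [sq_nonneg (‖z₁‖ - ‖z₂‖), sq_nonneg (‖z₁‖ - ω), sq_nonneg (‖z₂‖ - ω)]
  refine hcompare _ _ _ (by fun_prop) hS (norm_div_norm_add_norm_mem_Icc z₁ z₂) fun τ hτ =>
    ⟨sq_abs_sub_mul_le_norm_segment_sq_add z₁ z₂ ω hτ, ?_⟩
  linarith [norm_segment_sq_le z₁ z₂ hτ]
end

section
/- Let F : ℝⁿ → [0,∞) be C¹ with |z| g(|z|) ≤ F(z)/ν and F(z) ≤ L(|z| g(|z|) + 1), where g : [0,∞) → [1,∞) is non-decreasing, subadditive, and satisfies g(t) ≤ c₁ t for t ≥ 1. Suppose F is convex. Then there is a constant c depending only on L, ν, c₁ such that |∂F(z)| ≤ c g(|z|) for every z ∈ ℝⁿ. -/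
/-!
By convexity, `⟨∂F(z), h⟩ ≤ F(z + h) - F(z)` for every `h`, so `|∂F(z)|` is at most the
oscillation of `F` over the ball of radius `r` around `z`, divided by `r`. Taking `r = 1 + |z|`,
the upper growth bound of `F` together with monotonicity and subadditivity of `g` bounds that
oscillation by `(1 + |z|) g(|z|)` up to a constant depending only on `L` and `c₁`.
-/

open Set

lemma ConvexOn.apply_le_sub_of_hasFDerivAt {E : Type*} [NormedAddCommGroup E] [NormedSpace ℝ E]
    {F : E → ℝ} {F' : E →L[ℝ] ℝ} {z : E} (hconv : ConvexOn ℝ univ F) (hF : HasFDerivAt F F' z)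
    (h : E) : F' h ≤ F (z + h) - F z := by
  set φ : ℝ → ℝ := fun t => F (z + t • h)
  have hφ_conv : ConvexOn ℝ univ φ := by
    simpa [Function.comp_def, AffineMap.lineMap_apply, add_comm] using
      hconv.comp_affineMap (AffineMap.lineMap z (z + h))
  have hφ_deriv : HasDerivAt φ (F' h) 0 := by
    have hline : HasDerivAt (fun t : ℝ => z + t • h) h 0 := by
      simpa using ((hasDerivAt_id (0 : ℝ)).smul_const h).const_add z
    exact hF.comp_hasDerivAt_of_eq 0 hline (by simp)
  simpa [slope_def_field, φ] using
    hφ_conv.le_slope_of_hasDerivAt (mem_univ 0) (mem_univ 1) one_pos hφ_deriv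

lemma ContinuousLinearMap.norm_le_div_of_forall_norm_le_apply_le {E : Type*}
    [NormedAddCommGroup E] [NormedSpace ℝ E] {f : E →L[ℝ] ℝ} {r B : ℝ} (hr : 0 < r)
    (hf : ∀ x, ‖x‖ ≤ r → f x ≤ B) : ‖f‖ ≤ B / r := by
  have hB : 0 ≤ B := by simpa using hf 0 (by simpa using hr.le)
  refine f.opNorm_le_of_unit_norm (by positivity) fun x hx => ?_
  have hrx : ‖r • x‖ ≤ r := by simp [norm_smul, hx, abs_of_pos hr]
  have hpos := hf _ hrx
  have hneg := hf (-(r • x)) (by rwa [norm_neg])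
  simp only [map_neg, map_smul, smul_eq_mul] at hpos hneg
  rw [Real.norm_eq_abs, le_div_iff₀ hr]
  calc |f x| * r = |r * f x| := by rw [abs_mul, abs_of_pos hr, mul_comm]
    _ ≤ B := abs_le.2 ⟨by linarith, hpos⟩

lemma ConvexOn.norm_fderiv_le_div {E : Type*} [NormedAddCommGroup E] [NormedSpace ℝ E]
    {F : E → ℝ} {z : E} {r M : ℝ} (hconv : ConvexOn ℝ univ F) (hF : DifferentiableAt ℝ F z)
    (hr : 0 < r) (hM : ∀ h, ‖h‖ ≤ r → F (z + h) ≤ M) : ‖fderiv ℝ F z‖ ≤ (M - F z) / r :=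
  ContinuousLinearMap.norm_le_div_of_forall_norm_le_apply_le hr fun h hh =>
    (hconv.apply_le_sub_of_hasFDerivAt hF.hasFDerivAt h).trans (by linarith [hM h hh])

lemma MonotoneOn.le_two_mul_add_of_subadditive {g : ℝ → ℝ} (hmono : MonotoneOn g (Ici 0))
    (hsub : ∀ s t : ℝ, 0 ≤ s → 0 ≤ t → g (s + t) ≤ g s + g t) {s t : ℝ} (hs : 0 ≤ s)
    (ht : 0 ≤ t) (hst : s ≤ 2 * t + 1) : g s ≤ 2 * g t + g 1 :=
  calc g s ≤ g (t + (t + 1)) := hmono hs (by simp only [mem_Ici]; positivity) (by linarith)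
    _ ≤ g t + (g t + g 1) := (hsub t (t + 1) ht (by positivity)).trans
          (add_le_add_right (hsub t 1 ht zero_le_one) _)
    _ = 2 * g t + g 1 := by ring

theorem gradient_bound_nearly_linear_general (ν L c₁ : ℝ) (hL : 1 ≤ L)
    (hc₁ : 0 < c₁) :
    ∃ c : ℝ, 0 < c ∧
      ∀ (n : ℕ) (g : ℝ → ℝ) (F : EuclideanSpace ℝ (Fin n) → ℝ),
        MonotoneOn g (Set.Ici 0) →
        (∀ t : ℝ, 0 ≤ t → 1 ≤ g t) →
        (∀ s t : ℝ, 0 ≤ s → 0 ≤ t → g (s + t) ≤ g s + g t) →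
        (∀ t : ℝ, 1 ≤ t → g t ≤ c₁ * t) →
        ContDiff ℝ 1 F →
        ConvexOn ℝ Set.univ F →
        (∀ z, 0 ≤ F z) →
        (∀ z, ‖z‖ * g ‖z‖ ≤ F z / ν) →
        (∀ z, F z ≤ L * (‖z‖ * g ‖z‖ + 1)) →
        ∀ z, ‖fderiv ℝ F z‖ ≤ c * g ‖z‖ := by
  refine ⟨L * (2 * c₁ + 5), by positivity, ?_⟩
  intro n g F hmono hg1 hsub hglin hF hconv hFnonneg _ hupper z
  set t := ‖z‖
  have hgt : 1 ≤ g t := hg1 t (norm_nonneg z)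
  have hg1c : g 1 ≤ c₁ := by simpa using hglin 1 le_rfl
  have hM : ∀ h, ‖h‖ ≤ 1 + t → F (z + h) ≤ L * ((2 * t + 1) * (2 * g t + c₁) + 1) := by
    intro h hh
    have hzh : ‖z + h‖ ≤ 2 * t + 1 := by linarith [norm_add_le z h]
    have hg : g ‖z + h‖ ≤ 2 * g t + c₁ := by
      linarith [hmono.le_two_mul_add_of_subadditive hsub (norm_nonneg _) (norm_nonneg z) hzh]
    have hprod : ‖z + h‖ * g ‖z + h‖ ≤ (2 * t + 1) * (2 * g t + c₁) :=
      mul_le_mul hzh hg (by linarith [hg1 _ (norm_nonneg (z + h))]) (by positivity)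
    exact (hupper _).trans (by gcongr)
  have hgrad := hconv.norm_fderiv_le_div ((hF.differentiable one_ne_zero) z) (by positivity) hM
  rw [le_div_iff₀ (by positivity)] at hgrad
  have hcoeff : (2 * t + 1) * (2 * g t + c₁) + 1 ≤ (2 * c₁ + 5) * g t * (1 + t) := by
    nlinarith [mul_nonneg (sub_nonneg.2 hgt) (norm_nonneg z), norm_nonneg z]
  rw [← mul_le_mul_iff_of_pos_right (by positivity : (0 : ℝ) < 1 + t)]
  nlinarith [hFnonneg z]

/-- Lemma 2.1 of the paper (Marcellini type gradient bound). -/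
theorem gradient_bound_nearly_linear (ν L c₁ : ℝ) (hν : 0 < ν) (hL : 1 ≤ L)
    (hc₁ : 0 < c₁) :
    ∃ c : ℝ, 0 < c ∧
      ∀ (n : ℕ) (g : ℝ → ℝ) (F : EuclideanSpace ℝ (Fin n) → ℝ),
        MonotoneOn g (Set.Ici 0) →
        (∀ t : ℝ, 0 ≤ t → 1 ≤ g t) →
        (∀ s t : ℝ, 0 ≤ s → 0 ≤ t → g (s + t) ≤ g s + g t) →
        (∀ t : ℝ, 1 ≤ t → g t ≤ c₁ * t) →
        ContDiff ℝ 1 F →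
        ConvexOn ℝ Set.univ F →
        (∀ z, 0 ≤ F z) →
        (∀ z, ‖z‖ * g ‖z‖ ≤ F z / ν) →
        (∀ z, F z ≤ L * (‖z‖ * g ‖z‖ + 1)) →
        ∀ z, ‖fderiv ℝ F z‖ ≤ c * g ‖z‖ :=
  gradient_bound_nearly_linear_general ν L c₁ hL hc₁
end

section
/- Let V_{ω,p}(z) := (|z|² + ω²)^{(p-2)/4} z for z ∈ ℝⁿ, p > 0, ω ∈ [0,1]. Then there exist constants 0 < c₁ ≤ c₂ depending only on n and p such that for all z₁, z₂ ∈ ℝⁿ (not both zero if ω = 0), c₁ (|z₁|² + |z₂|² + ω²)^{(p-2)/4} |z₁ - z₂| ≤ |V_{ω,p}(z₁) - V_{ω,p}(z₂)| ≤ c₂ (|z₁|² + |z₂|² + ω²)^{(p-2)/4} |z₁ - z₂|. -/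
/-!
Write `V(z) = f(‖z‖) • z` with `f(s) = (s² + ω²)^γ`, `γ = (p - 2)/4 > -1/2`, and assume
`‖z₂‖ ≤ ‖z₁‖`. Then `‖z₁‖² + ω² ≤ S := ‖z₁‖² + ‖z₂‖² + ω² ≤ 2 (‖z₁‖² + ω²)`, so `S^γ` may be
replaced by `f₁ = f(‖z₁‖)` at the cost of a factor `2^|γ|`; put `f₂ = f(‖z₂‖)`.

For `γ ≥ 0` the field is monotone: `⟪V z₁ - V z₂, z₁ - z₂⟫ ≥ (f₁ + f₂)/2 ‖z₁ - z₂‖²` gives the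
lower bound, and `V z₁ - V z₂ = f₁ (z₁ - z₂) + (f₁ - f₂) z₂` with the growth estimate
`(f₁ - f₂) ‖z₂‖ ≤ 2 (1 + γ) f₁ (‖z₁‖ - ‖z₂‖)` the upper one.

For `γ ≤ 0` both bounds come from the identity
`‖f₁ z₁ - f₂ z₂‖² = f₁ f₂ (‖z₁ - z₂‖² - (‖z₁‖ - ‖z₂‖)²) + (f₁ ‖z₁‖ - f₂ ‖z₂‖)²`:
the angular part is controlled by `f₁ ≤ f₂` and the monotonicity of `s ↦ f(s) s`, and the radial
part by `(1 + 2γ) f₁ (‖z₁‖ - ‖z₂‖) ≤ f₁ ‖z₁‖ - f₂ ‖z₂‖ ≤ f₁ (‖z₁‖ - ‖z₂‖)`, where the first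
inequality is the weighted AM-GM inequality.
-/

open Real
open scoped InnerProductSpace

section Scalar

variable {a b x y γ : ℝ}

theorem rpow_mul_le_rpow_mul_of_le (hy : 0 ≤ y) (hyx : y ≤ x) (hγ : γ ≤ 1) :
    x ^ γ * y ≤ y ^ γ * x := by
  have hsplit : ∀ t : ℝ, 0 ≤ t → t = t ^ γ * t ^ (1 - γ) := fun t ht => by
    rw [← rpow_add' ht (by simp), add_sub_cancel, rpow_one]
  calc x ^ γ * y = x ^ γ * y ^ γ * y ^ (1 - γ) := by rw [mul_assoc, ← hsplit y hy]
    _ ≤ x ^ γ * y ^ γ * x ^ (1 - γ) :=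
      mul_le_mul_of_nonneg_left (rpow_le_rpow hy hyx (by linarith))
        (mul_nonneg (rpow_nonneg (hy.trans hyx) _) (rpow_nonneg hy _))
    _ = y ^ γ * (x ^ γ * x ^ (1 - γ)) := by ring
    _ = y ^ γ * x := by rw [← hsplit x (hy.trans hyx)]

theorem rpow_sub_rpow_mul_le (hy : 0 ≤ y) (hyx : y ≤ x) (hγ : 0 ≤ γ) :
    (x ^ γ - y ^ γ) * x ≤ (1 + γ) * x ^ γ * (x - y) := by
  rcases (hy.trans hyx).eq_or_lt with rfl | hx
  · obtain rfl : y = 0 := le_antisymm hyx hy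
    simp
  have hxγ : 0 ≤ x ^ γ := by positivity
  have hslack : 0 ≤ γ * x ^ γ * (x - y) := by have := sub_nonneg.2 hyx; positivity
  rcases le_total γ 1 with hγ₁ | hγ₁
  · nlinarith [rpow_mul_le_rpow_mul_of_le hy hyx hγ₁]
  · -- Bernoulli's inequality at `y / x = 1 + (y / x - 1)`
    have hb := one_add_mul_self_le_rpow_one_add (s := y / x - 1)
      (by have := div_nonneg hy hx.le; linarith) hγ₁
    rw [add_sub_cancel, div_rpow hy hx.le, le_div_iff₀ (by positivity)] at hb
    have : (1 + γ * (y / x - 1)) * x ^ γ * x = x ^ γ * x - γ * x ^ γ * (x - y) := by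
      field_simp; ring
    nlinarith [mul_le_mul_of_nonneg_right hb hx.le]

theorem rpow_le_two_rpow_abs_mul_rpow {u v : ℝ} (γ : ℝ) (hu : 0 ≤ u) (huv : u ≤ 2 * v)
    (hvu : v ≤ 2 * u) : u ^ γ ≤ 2 ^ |γ| * v ^ γ := by
  rcases hu.eq_or_lt with rfl | hu
  · obtain rfl : v = 0 := by linarith
    exact le_mul_of_one_le_left (by positivity) (one_le_rpow (by norm_num) (abs_nonneg γ))
  have hv : 0 < v := by linarith
  rcases le_total 0 γ with hγ | hγ
  · calc u ^ γ ≤ (2 * v) ^ γ := rpow_le_rpow hu.le huv hγ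
      _ = 2 ^ |γ| * v ^ γ := by rw [mul_rpow zero_le_two hv.le, abs_of_nonneg hγ]
  · calc u ^ γ ≤ (v / 2) ^ γ := rpow_le_rpow_of_nonpos (by positivity) (by linarith) hγ
      _ = 2 ^ |γ| * v ^ γ := by
        rw [div_rpow hv.le zero_le_two, abs_of_nonpos hγ, rpow_neg zero_le_two]; ring

theorem sq_add_sq_rpow_sub_rpow_mul_le (μ : ℝ) (hb : 0 ≤ b) (hba : b ≤ a) (hγ : 0 ≤ γ) :
    ((a ^ 2 + μ ^ 2) ^ γ - (b ^ 2 + μ ^ 2) ^ γ) * b ≤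
      2 * (1 + γ) * (a ^ 2 + μ ^ 2) ^ γ * (a - b) := by
  rcases hb.eq_or_lt with rfl | hb
  · simp only [mul_zero, sub_zero]; have := hb.trans hba; positivity
  have hx : 0 < a ^ 2 + μ ^ 2 := by nlinarith
  have hmono := rpow_sub_rpow_mul_le (x := a ^ 2 + μ ^ 2) (y := b ^ 2 + μ ^ 2) (by positivity)
    (by nlinarith) hγ
  rw [show (a ^ 2 + μ ^ 2) - (b ^ 2 + μ ^ 2) = (a - b) * (a + b) by ring] at hmono
  have hsum : (a + b) * b ≤ 2 * (a ^ 2 + μ ^ 2) := by nlinarith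
  have hcoef : 0 ≤ (1 + γ) * (a ^ 2 + μ ^ 2) ^ γ * (a - b) := by
    have := sub_nonneg.2 hba; positivity
  refine le_of_mul_le_mul_right ?_ hx
  calc _ = (((a ^ 2 + μ ^ 2) ^ γ - (b ^ 2 + μ ^ 2) ^ γ) * (a ^ 2 + μ ^ 2)) * b := by ring
    _ ≤ (1 + γ) * (a ^ 2 + μ ^ 2) ^ γ * (a - b) * ((a + b) * b) := by
      nlinarith [mul_le_mul_of_nonneg_right hmono hb.le]
    _ ≤ (1 + γ) * (a ^ 2 + μ ^ 2) ^ γ * (a - b) * (2 * (a ^ 2 + μ ^ 2)) := by gcongr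
    _ = _ := by ring

theorem mul_sub_le_sq_add_sq_rpow_mul_sub (μ : ℝ) (hb : 0 ≤ b) (hba : b ≤ a) (hγ₀ : -1 / 2 ≤ γ)
    (hγ : γ ≤ 0) :
    (1 + 2 * γ) * (a ^ 2 + μ ^ 2) ^ γ * (a - b) ≤
      (a ^ 2 + μ ^ 2) ^ γ * a - (b ^ 2 + μ ^ 2) ^ γ * b := by
  rcases hb.eq_or_lt with rfl | hb
  · have : 0 ≤ (a ^ 2 + μ ^ 2) ^ γ * a := by have := hb.trans hba; positivity
    nlinarith
  have ha : 0 < a := hb.trans_le hba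
  have hx : 0 < a ^ 2 + μ ^ 2 := by positivity
  have hy : 0 < b ^ 2 + μ ^ 2 := by positivity
  have hsq : ∀ s : ℝ, 0 ≤ s → (s ^ 2) ^ γ = s ^ (2 * γ) := fun s hs => by
    rw [← rpow_natCast, ← rpow_mul hs]; norm_num
  -- `s ↦ s ^ (-2γ) (s² + μ²) ^ γ = (s² / (s² + μ²)) ^ (-γ)` is nondecreasing
  have hratio : a ^ (2 * γ) * (b ^ 2 + μ ^ 2) ^ γ ≤ b ^ (2 * γ) * (a ^ 2 + μ ^ 2) ^ γ := by
    have := rpow_le_rpow_of_nonpos (by positivity)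
      (show b ^ 2 * (a ^ 2 + μ ^ 2) ≤ a ^ 2 * (b ^ 2 + μ ^ 2) by
        nlinarith [mul_le_mul_of_nonneg_right (pow_le_pow_left₀ hb.le hba 2) (sq_nonneg μ)]) hγ
    rwa [mul_rpow (by positivity) hy.le, mul_rpow (by positivity) hx.le, hsq a ha.le,
      hsq b hb.le] at this
  have hcancel : a ^ (-2 * γ) * a ^ (2 * γ) = 1 := by rw [← rpow_add ha]; simp
  have hamgm : a ^ (-2 * γ) * b ^ (1 + 2 * γ) ≤ -2 * γ * a + (1 + 2 * γ) * b :=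
    geom_mean_le_arith_mean2_weighted (by linarith) (by linarith) ha.le hb.le (by ring)
  have key : (b ^ 2 + μ ^ 2) ^ γ * b ≤ (a ^ 2 + μ ^ 2) ^ γ * (-2 * γ * a + (1 + 2 * γ) * b) :=
    calc (b ^ 2 + μ ^ 2) ^ γ * b
        = a ^ (-2 * γ) * b * (a ^ (2 * γ) * (b ^ 2 + μ ^ 2) ^ γ) := by
          linear_combination (-(b ^ 2 + μ ^ 2) ^ γ * b) * hcancel
      _ ≤ a ^ (-2 * γ) * b * (b ^ (2 * γ) * (a ^ 2 + μ ^ 2) ^ γ) := by gcongr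
      _ = (a ^ 2 + μ ^ 2) ^ γ * (a ^ (-2 * γ) * b ^ (1 + 2 * γ)) := by
          rw [add_comm 1, rpow_add_one hb.ne']; ring
      _ ≤ _ := by gcongr
  linarith

end Scalar

section NormedSpace

variable {E : Type*} [SeminormedAddCommGroup E] [NormedSpace ℝ E]

theorem norm_smul_sub_smul_le (f₁ f₂ : ℝ) (z₁ z₂ : E) :
    ‖f₁ • z₁ - f₂ • z₂‖ ≤ |f₁| * ‖z₁ - z₂‖ + |f₁ - f₂| * ‖z₂‖ := by
  calc ‖f₁ • z₁ - f₂ • z₂‖ = ‖f₁ • (z₁ - z₂) + (f₁ - f₂) • z₂‖ := by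
        rw [smul_sub, sub_smul, sub_add_sub_cancel]
    _ ≤ ‖f₁ • (z₁ - z₂)‖ + ‖(f₁ - f₂) • z₂‖ := norm_add_le _ _
    _ = |f₁| * ‖z₁ - z₂‖ + |f₁ - f₂| * ‖z₂‖ := by
        rw [norm_smul, norm_smul, Real.norm_eq_abs, Real.norm_eq_abs]

end NormedSpace

section InnerProductSpace

variable {F : Type*} [NormedAddCommGroup F] [InnerProductSpace ℝ F]

theorem inner_smul_sub_smul_sub (f₁ f₂ : ℝ) (z₁ z₂ : F) :
    ⟪f₁ • z₁ - f₂ • z₂, z₁ - z₂⟫_ℝ =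
      (f₁ + f₂) / 2 * ‖z₁ - z₂‖ ^ 2 + (f₁ - f₂) * (‖z₁‖ ^ 2 - ‖z₂‖ ^ 2) / 2 := by
  simp only [norm_sub_sq_real, inner_sub_left, inner_sub_right, real_inner_smul_left,
    real_inner_self_eq_norm_sq, real_inner_comm z₁ z₂]
  ring

theorem add_div_two_mul_norm_sub_le_norm_smul_sub_smul {f₁ f₂ : ℝ} {z₁ z₂ : F}
    (h : 0 ≤ (f₁ - f₂) * (‖z₁‖ ^ 2 - ‖z₂‖ ^ 2)) :
    (f₁ + f₂) / 2 * ‖z₁ - z₂‖ ≤ ‖f₁ • z₁ - f₂ • z₂‖ := by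
  rcases (norm_nonneg (z₁ - z₂)).eq_or_lt with hd | hd
  · rw [← hd, mul_zero]; exact norm_nonneg _
  refine le_of_mul_le_mul_right ?_ hd
  calc (f₁ + f₂) / 2 * ‖z₁ - z₂‖ * ‖z₁ - z₂‖ ≤ ⟪f₁ • z₁ - f₂ • z₂, z₁ - z₂⟫_ℝ := by
        rw [inner_smul_sub_smul_sub]; nlinarith
    _ ≤ _ := real_inner_le_norm _ _

theorem norm_smul_sub_smul_sq (f₁ f₂ : ℝ) (z₁ z₂ : F) :
    ‖f₁ • z₁ - f₂ • z₂‖ ^ 2 =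
      f₁ * f₂ * (‖z₁ - z₂‖ ^ 2 - (‖z₁‖ - ‖z₂‖) ^ 2) + (f₁ * ‖z₁‖ - f₂ * ‖z₂‖) ^ 2 := by
  rw [norm_sub_sq_real, norm_sub_sq_real, norm_smul, norm_smul, real_inner_smul_left,
    real_inner_smul_right, Real.norm_eq_abs, Real.norm_eq_abs, mul_pow, mul_pow, sq_abs, sq_abs]
  ring

theorem norm_mul_sq_sub_sq_le (z₁ z₂ : F) :
    ‖z₁‖ * (‖z₁ - z₂‖ ^ 2 - (‖z₁‖ - ‖z₂‖) ^ 2) ≤ 4 * ‖z₂‖ * ‖z₁ - z₂‖ ^ 2 := by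
  obtain ⟨hlo, hhi⟩ := abs_le.1 (abs_real_inner_le_norm z₁ z₂)
  have hB := norm_nonneg z₂
  rw [norm_sub_sq_real]
  -- both sides are affine in `⟪z₁, z₂⟫`; compare at the end of `[-‖z₁‖‖z₂‖, ‖z₁‖‖z₂‖]`
  -- selected by the sign of the slope `8 ‖z₂‖ - 2 ‖z₁‖`
  rcases le_total ‖z₁‖ (4 * ‖z₂‖) with h | h
  · nlinarith [mul_nonneg (sub_nonneg.2 h) (sub_nonneg.2 hhi),
      mul_nonneg hB (sq_nonneg (‖z₁‖ - ‖z₂‖))]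
  · nlinarith [mul_nonneg (sub_nonneg.2 h) (neg_le_iff_add_nonneg.1 hlo), pow_nonneg hB 3,
      norm_nonneg z₁]

theorem mul_norm_sub_le_norm_smul_sub_smul {c f₁ f₂ : ℝ} {z₁ z₂ : F} (hc₀ : 0 ≤ c) (hc₁ : c ≤ 1)
    (hf₁ : 0 ≤ f₁) (hf : f₁ ≤ f₂) (hz : ‖z₂‖ ≤ ‖z₁‖)
    (h : c * f₁ * (‖z₁‖ - ‖z₂‖) ≤ f₁ * ‖z₁‖ - f₂ * ‖z₂‖) :
    c * f₁ * ‖z₁ - z₂‖ ≤ ‖f₁ • z₁ - f₂ • z₂‖ := by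
  have hAB : 0 ≤ ‖z₁‖ - ‖z₂‖ := sub_nonneg.2 hz
  have hD : 0 ≤ ‖z₁ - z₂‖ ^ 2 - (‖z₁‖ - ‖z₂‖) ^ 2 :=
    sub_nonneg.2 (pow_le_pow_left₀ hAB (norm_sub_norm_le z₁ z₂) 2)
  have hcoef : (c * f₁) ^ 2 ≤ f₁ * f₂ :=
    calc (c * f₁) ^ 2 ≤ 1 * (f₁ * f₁) := by
          rw [mul_pow, sq f₁]; gcongr; exact pow_le_one₀ hc₀ hc₁
      _ ≤ f₁ * f₂ := by rw [one_mul]; gcongr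
  refine (pow_le_pow_iff_left₀ (by positivity) (norm_nonneg _) two_ne_zero).mp ?_
  calc (c * f₁ * ‖z₁ - z₂‖) ^ 2
      = (c * f₁) ^ 2 * (‖z₁ - z₂‖ ^ 2 - (‖z₁‖ - ‖z₂‖) ^ 2) + (c * f₁ * (‖z₁‖ - ‖z₂‖)) ^ 2 := by
        ring
    _ ≤ f₁ * f₂ * (‖z₁ - z₂‖ ^ 2 - (‖z₁‖ - ‖z₂‖) ^ 2) + (f₁ * ‖z₁‖ - f₂ * ‖z₂‖) ^ 2 :=
        add_le_add (mul_le_mul_of_nonneg_right hcoef hD) (pow_le_pow_left₀ (by positivity) h 2)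
    _ = ‖f₁ • z₁ - f₂ • z₂‖ ^ 2 := (norm_smul_sub_smul_sq f₁ f₂ z₁ z₂).symm

theorem norm_smul_sub_smul_le_three_mul {f₁ f₂ : ℝ} {z₁ z₂ : F} (hf₁ : 0 ≤ f₁) (hf : f₁ ≤ f₂)
    (hmono : f₂ * ‖z₂‖ ≤ f₁ * ‖z₁‖) :
    ‖f₁ • z₁ - f₂ • z₂‖ ≤ 3 * f₁ * ‖z₁ - z₂‖ := by
  rcases eq_or_ne z₂ 0 with rfl | hz₂
  · rw [smul_zero, sub_zero, sub_zero, norm_smul, Real.norm_eq_abs, abs_of_nonneg hf₁]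
    nlinarith [mul_nonneg hf₁ (norm_nonneg z₁)]
  have hB : 0 < ‖z₂‖ := norm_pos_iff.2 hz₂
  set D := ‖z₁ - z₂‖ ^ 2 - (‖z₁‖ - ‖z₂‖) ^ 2 with hD_def
  have hD : 0 ≤ D :=
    sub_nonneg.2 (sq_le_sq.2 ((abs_norm_sub_norm_le z₁ z₂).trans (le_abs_self _)))
  have hcross : f₂ * D ≤ 4 * f₁ * ‖z₁ - z₂‖ ^ 2 := by
    refine le_of_mul_le_mul_right ?_ hB
    calc f₂ * D * ‖z₂‖ = f₂ * ‖z₂‖ * D := by ring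
      _ ≤ f₁ * ‖z₁‖ * D := mul_le_mul_of_nonneg_right hmono hD
      _ = f₁ * (‖z₁‖ * D) := by ring
      _ ≤ f₁ * (4 * ‖z₂‖ * ‖z₁ - z₂‖ ^ 2) :=
          mul_le_mul_of_nonneg_left (norm_mul_sq_sub_sq_le z₁ z₂) hf₁
      _ = 4 * f₁ * ‖z₁ - z₂‖ ^ 2 * ‖z₂‖ := by ring
  have hradial : f₁ * ‖z₁‖ - f₂ * ‖z₂‖ ≤ f₁ * ‖z₁ - z₂‖ := by
    nlinarith [mul_le_mul_of_nonneg_left (norm_sub_norm_le z₁ z₂) hf₁,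
      mul_le_mul_of_nonneg_right hf (norm_nonneg z₂)]
  refine (pow_le_pow_iff_left₀ (norm_nonneg _) (by positivity) two_ne_zero).mp ?_
  rw [norm_smul_sub_smul_sq, ← hD_def]
  nlinarith [mul_le_mul_of_nonneg_left hcross hf₁,
    pow_le_pow_left₀ (sub_nonneg.2 hmono) hradial 2, sq_nonneg (f₁ * ‖z₁ - z₂‖)]

end InnerProductSpace

section VField

variable {F : Type*} [NormedAddCommGroup F] [InnerProductSpace ℝ F]

/-- The paper's `V_{ω,p}` is `vField ω ((p - 2) / 4)`. -/
noncomputable def vField (ω γ : ℝ) (z : F) : F := (‖z‖ ^ 2 + ω ^ 2) ^ γ • z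

variable (ω : ℝ) {γ : ℝ} {z₁ z₂ : F}

theorem vField_bounds_of_nonneg (hγ : 0 ≤ γ) (hz : ‖z₂‖ ≤ ‖z₁‖) :
    (‖z₁‖ ^ 2 + ω ^ 2) ^ γ / 2 * ‖z₁ - z₂‖ ≤ ‖vField ω γ z₁ - vField ω γ z₂‖ ∧
      ‖vField ω γ z₁ - vField ω γ z₂‖ ≤ (3 + 2 * γ) * (‖z₁‖ ^ 2 + ω ^ 2) ^ γ * ‖z₁ - z₂‖ := by
  have hf₂ : 0 ≤ (‖z₂‖ ^ 2 + ω ^ 2) ^ γ := by positivity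
  have hf : (‖z₂‖ ^ 2 + ω ^ 2) ^ γ ≤ (‖z₁‖ ^ 2 + ω ^ 2) ^ γ :=
    rpow_le_rpow (by positivity) (by gcongr) hγ
  have hsq : 0 ≤ ‖z₁‖ ^ 2 - ‖z₂‖ ^ 2 := sub_nonneg.2 (by gcongr)
  have hgrowth := sq_add_sq_rpow_sub_rpow_mul_le ω (norm_nonneg z₂) hz hγ
  have hd := norm_sub_norm_le z₁ z₂
  constructor
  · calc (‖z₁‖ ^ 2 + ω ^ 2) ^ γ / 2 * ‖z₁ - z₂‖
        ≤ ((‖z₁‖ ^ 2 + ω ^ 2) ^ γ + (‖z₂‖ ^ 2 + ω ^ 2) ^ γ) / 2 * ‖z₁ - z₂‖ := by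
          gcongr; linarith
      _ ≤ _ := add_div_two_mul_norm_sub_le_norm_smul_sub_smul
          (mul_nonneg (sub_nonneg.2 hf) hsq)
  · calc _ ≤ _ := norm_smul_sub_smul_le _ _ z₁ z₂
      _ = (‖z₁‖ ^ 2 + ω ^ 2) ^ γ * ‖z₁ - z₂‖ +
          ((‖z₁‖ ^ 2 + ω ^ 2) ^ γ - (‖z₂‖ ^ 2 + ω ^ 2) ^ γ) * ‖z₂‖ := by
        rw [abs_of_nonneg (hf₂.trans hf), abs_of_nonneg (sub_nonneg.2 hf)]
      _ ≤ _ := by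
        nlinarith [mul_le_mul_of_nonneg_left hd (by positivity :
          0 ≤ 2 * (1 + γ) * (‖z₁‖ ^ 2 + ω ^ 2) ^ γ)]

theorem vField_bounds_of_nonpos (hγ₀ : -1 / 2 ≤ γ) (hγ : γ ≤ 0) (hz : ‖z₂‖ ≤ ‖z₁‖) :
    (1 + 2 * γ) * (‖z₁‖ ^ 2 + ω ^ 2) ^ γ * ‖z₁ - z₂‖ ≤ ‖vField ω γ z₁ - vField ω γ z₂‖ ∧
      ‖vField ω γ z₁ - vField ω γ z₂‖ ≤ 3 * (‖z₁‖ ^ 2 + ω ^ 2) ^ γ * ‖z₁ - z₂‖ := by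
  have hf₁ : 0 ≤ (‖z₁‖ ^ 2 + ω ^ 2) ^ γ := by positivity
  rcases eq_or_ne z₂ 0 with rfl | hz₂
  · have : 0 ≤ (‖z₁‖ ^ 2 + ω ^ 2) ^ γ * ‖z₁‖ := by positivity
    simp only [vField, smul_zero, sub_zero, norm_smul, Real.norm_eq_abs, abs_of_nonneg hf₁]
    constructor <;> nlinarith
  have hy : 0 < ‖z₂‖ ^ 2 + ω ^ 2 := by have := norm_pos_iff.2 hz₂; positivity
  have hf : (‖z₁‖ ^ 2 + ω ^ 2) ^ γ ≤ (‖z₂‖ ^ 2 + ω ^ 2) ^ γ :=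
    rpow_le_rpow_of_nonpos hy (by gcongr) hγ
  have hgap := mul_sub_le_sq_add_sq_rpow_mul_sub ω (norm_nonneg z₂) hz hγ₀ hγ
  have hgap₀ : 0 ≤ (1 + 2 * γ) * (‖z₁‖ ^ 2 + ω ^ 2) ^ γ * (‖z₁‖ - ‖z₂‖) := by
    have := sub_nonneg.2 hz; have : 0 ≤ 1 + 2 * γ := by linarith
    positivity
  exact ⟨mul_norm_sub_le_norm_smul_sub_smul (by linarith) (by linarith) hf₁ hf hz hgap,
    norm_smul_sub_smul_le_three_mul hf₁ hf (by linarith)⟩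

theorem vField_bounds_of_norm_le (hγ : -1 / 2 ≤ γ) (hz : ‖z₂‖ ≤ ‖z₁‖) :
    min (1 / 2) (1 + 2 * γ) * (‖z₁‖ ^ 2 + ω ^ 2) ^ γ * ‖z₁ - z₂‖ ≤
        ‖vField ω γ z₁ - vField ω γ z₂‖ ∧
      ‖vField ω γ z₁ - vField ω γ z₂‖ ≤ (3 + 2 * |γ|) * (‖z₁‖ ^ 2 + ω ^ 2) ^ γ * ‖z₁ - z₂‖ := by
  have hw : 0 ≤ (‖z₁‖ ^ 2 + ω ^ 2) ^ γ * ‖z₁ - z₂‖ := by positivity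
  rcases le_total 0 γ with hγ₀ | hγ₀
  · obtain ⟨hlow, hupp⟩ := vField_bounds_of_nonneg ω hγ₀ hz
    rw [abs_of_nonneg hγ₀]
    exact ⟨by nlinarith [mul_le_mul_of_nonneg_right (min_le_left (1 / 2) (1 + 2 * γ)) hw], hupp⟩
  · obtain ⟨hlow, hupp⟩ := vField_bounds_of_nonpos ω hγ hγ₀ hz
    exact ⟨by nlinarith [mul_le_mul_of_nonneg_right (min_le_right (1 / 2) (1 + 2 * γ)) hw],
      by nlinarith [mul_le_mul_of_nonneg_right (abs_nonneg γ) hw]⟩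

theorem vField_bounds (hγ : -1 / 2 ≤ γ) (z₁ z₂ : F) :
    min (1 / 2) (1 + 2 * γ) / 2 ^ |γ| * (‖z₁‖ ^ 2 + ‖z₂‖ ^ 2 + ω ^ 2) ^ γ * ‖z₁ - z₂‖ ≤
        ‖vField ω γ z₁ - vField ω γ z₂‖ ∧
      ‖vField ω γ z₁ - vField ω γ z₂‖ ≤
        (3 + 2 * |γ|) * 2 ^ |γ| * (‖z₁‖ ^ 2 + ‖z₂‖ ^ 2 + ω ^ 2) ^ γ * ‖z₁ - z₂‖ := by
  wlog hz : ‖z₂‖ ≤ ‖z₁‖ generalizing z₁ z₂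
  · have := this z₂ z₁ (le_of_not_ge hz)
    rwa [norm_sub_rev z₂, norm_sub_rev (vField ω γ z₂), add_comm (‖z₂‖ ^ 2)] at this
  obtain ⟨hlow, hupp⟩ := vField_bounds_of_norm_le ω hγ hz
  have hx : 0 ≤ ‖z₁‖ ^ 2 + ω ^ 2 := by positivity
  have hxS : ‖z₁‖ ^ 2 + ω ^ 2 ≤ 2 * (‖z₁‖ ^ 2 + ‖z₂‖ ^ 2 + ω ^ 2) := by nlinarith
  have hSx : ‖z₁‖ ^ 2 + ‖z₂‖ ^ 2 + ω ^ 2 ≤ 2 * (‖z₁‖ ^ 2 + ω ^ 2) := by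
    nlinarith [pow_le_pow_left₀ (norm_nonneg z₂) hz 2]
  have hc : 0 ≤ min (1 / 2) (1 + 2 * γ) := le_min (by norm_num) (by linarith)
  have h2 : 0 < (2 : ℝ) ^ |γ| := by positivity
  constructor
  · calc min (1 / 2) (1 + 2 * γ) / 2 ^ |γ| * (‖z₁‖ ^ 2 + ‖z₂‖ ^ 2 + ω ^ 2) ^ γ * ‖z₁ - z₂‖
        ≤ min (1 / 2) (1 + 2 * γ) / 2 ^ |γ| * (2 ^ |γ| * (‖z₁‖ ^ 2 + ω ^ 2) ^ γ) *
            ‖z₁ - z₂‖ := by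
          gcongr; exact rpow_le_two_rpow_abs_mul_rpow γ (by positivity) hSx hxS
      _ = min (1 / 2) (1 + 2 * γ) * (‖z₁‖ ^ 2 + ω ^ 2) ^ γ * ‖z₁ - z₂‖ := by
          field_simp
      _ ≤ _ := hlow
  · calc _ ≤ (3 + 2 * |γ|) * (‖z₁‖ ^ 2 + ω ^ 2) ^ γ * ‖z₁ - z₂‖ := hupp
      _ ≤ (3 + 2 * |γ|) * (2 ^ |γ| * (‖z₁‖ ^ 2 + ‖z₂‖ ^ 2 + ω ^ 2) ^ γ) * ‖z₁ - z₂‖ := by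
          gcongr; exact rpow_le_two_rpow_abs_mul_rpow γ hx hxS hSx
      _ = _ := by ring

end VField

/-- the basic estimate (Vm) for the vector field `V_{ω,p}`. -/
theorem V_field_estimate (n : ℕ) (p : ℝ) (hp : 0 < p) :
    ∃ c₁ c₂ : ℝ, 0 < c₁ ∧ c₁ ≤ c₂ ∧
      ∀ (ω : ℝ), ω ∈ Set.Icc (0:ℝ) 1 →
      ∀ z₁ z₂ : EuclideanSpace ℝ (Fin n), 0 < ‖z₁‖ + ‖z₂‖ + ω →
        c₁ * (‖z₁‖^2 + ‖z₂‖^2 + ω^2) ^ ((p-2)/4) * ‖z₁ - z₂‖ ≤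
            ‖((‖z₁‖^2 + ω^2) ^ ((p-2)/4)) • z₁ - ((‖z₂‖^2 + ω^2) ^ ((p-2)/4)) • z₂‖ ∧
          ‖((‖z₁‖^2 + ω^2) ^ ((p-2)/4)) • z₁ - ((‖z₂‖^2 + ω^2) ^ ((p-2)/4)) • z₂‖ ≤
            c₂ * (‖z₁‖^2 + ‖z₂‖^2 + ω^2) ^ ((p-2)/4) * ‖z₁ - z₂‖ := by
  have hγ : -1 / 2 < (p - 2) / 4 := by linarith
  set γ := (p - 2) / 4
  have h2 : 1 ≤ (2 : ℝ) ^ |γ| := one_le_rpow one_le_two (abs_nonneg γ)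
  have hc : 0 < min (1 / 2) (1 + 2 * γ) := lt_min (by norm_num) (by linarith)
  refine ⟨min (1 / 2) (1 + 2 * γ) / 2 ^ |γ|, (3 + 2 * |γ|) * 2 ^ |γ|, by positivity, ?_,
    fun ω _ z₁ z₂ _ => vField_bounds ω hγ.le z₁ z₂⟩
  calc min (1 / 2) (1 + 2 * γ) / 2 ^ |γ| ≤ 1 / 2 :=
        (div_le_self hc.le h2).trans (min_le_left _ _)
    _ ≤ 3 * 1 := by norm_num
    _ ≤ (3 + 2 * |γ|) * 2 ^ |γ| := by gcongr; linarith [abs_nonneg γ]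
end
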